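/- arXiv:1604.02575 — 5 statements merged into one kernel-verified Lean document; each statement's English description precedes it below -/
import Mathlib

section
/- Let (X, 𝔅) be a measurable space, Λ a σ-finite measure on X, and μ₁, μ₂ probability measures on X, both absolutely continuous with respect to Λ. If h : X → ℝ is measurable with ∫_X h(u)² dμ₁(u) < ∞ and ∫_X h(u)² dμ₂(u) < ∞, then |∫_X h(u) dμ₁(u) − ∫_X h(u) dμ₂(u)| ≤ 2 (∫_X h(u)² dμ₁(u) + ∫_X h(u)² dμ₂(u))^{1/2} · d_H(μ₁, μ₂). -/
/-!
With `aᵢ = √(dμᵢ/dΛ)`, the difference of the two integrals is `∫ h (a₁ + a₂) (a₁ - a₂) dΛ`.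
By Cauchy–Schwarz it is at most `‖h (a₁ + a₂)‖₂ ‖a₁ - a₂‖₂`. The second factor is `√2 d_H(μ₁, μ₂)`,
and `(a₁ + a₂)² ≤ 2 (a₁² + a₂²)` bounds the square of the first by
`2 (∫ h² dμ₁ + ∫ h² dμ₂)`.
-/

open MeasureTheory

/-- The Hellinger distance between two measures `μ₁, μ₂`, computed with respect to a
dominating measure `Λ`:
`d_H(μ₁, μ₂) = ( (1/2) ∫ (√(dμ₁/dΛ) − √(dμ₂/dΛ))² dΛ )^{1/2}`. -/
noncomputable def hellingerDist {X : Type*} [MeasurableSpace X]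
    (μ₁ μ₂ Λ : Measure X) : ℝ :=
  Real.sqrt ((1 / 2) * ∫ u,
    (Real.sqrt ((μ₁.rnDeriv Λ u).toReal) - Real.sqrt ((μ₂.rnDeriv Λ u).toReal)) ^ 2 ∂Λ)

section

variable {X : Type*} [MeasurableSpace X] {μ μ₁ μ₂ Λ : Measure X}

theorem abs_integral_mul_le_sqrt_mul_sqrt {f g : X → ℝ} (hf : MemLp f 2 μ) (hg : MemLp g 2 μ) :
    |∫ u, f u * g u ∂μ| ≤ √(∫ u, f u ^ 2 ∂μ) * √(∫ u, g u ^ 2 ∂μ) := by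
  have holder := integral_mul_norm_le_Lp_mul_Lq Real.HolderConjugate.two_two
    (by simpa using hf) (by simpa using hg)
  simp only [Real.norm_eq_abs, Real.rpow_two, sq_abs, ← Real.sqrt_eq_rpow] at holder
  calc |∫ u, f u * g u ∂μ| ≤ ∫ u, |f u| * |g u| ∂μ := by
        simpa only [abs_mul] using abs_integral_le_integral_abs (f := fun u => f u * g u)
    _ ≤ _ := holder

noncomputable def sqrtRnDeriv (μ Λ : Measure X) (u : X) : ℝ :=
  √(μ.rnDeriv Λ u).toReal

lemma sqrtRnDeriv_nonneg (u : X) : 0 ≤ sqrtRnDeriv μ Λ u := Real.sqrt_nonneg _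

lemma sq_sqrtRnDeriv (u : X) : sqrtRnDeriv μ Λ u ^ 2 = (μ.rnDeriv Λ u).toReal :=
  Real.sq_sqrt ENNReal.toReal_nonneg

lemma measurable_sqrtRnDeriv : Measurable (sqrtRnDeriv μ Λ) :=
  (Measure.measurable_rnDeriv μ Λ).ennreal_toReal.sqrt

lemma hellingerDist_nonneg : 0 ≤ hellingerDist μ₁ μ₂ Λ := Real.sqrt_nonneg _

lemma two_mul_hellingerDist_sq :
    2 * hellingerDist μ₁ μ₂ Λ ^ 2 = ∫ u, (sqrtRnDeriv μ₁ Λ u - sqrtRnDeriv μ₂ Λ u) ^ 2 ∂Λ := by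
  change 2 * √(1 / 2 * ∫ u, (sqrtRnDeriv μ₁ Λ u - sqrtRnDeriv μ₂ Λ u) ^ 2 ∂Λ) ^ 2 = _
  rw [Real.sq_sqrt (mul_nonneg one_half_pos.le (integral_nonneg fun u => sq_nonneg _))]
  ring

lemma memLp_sqrtRnDeriv_sub [IsFiniteMeasure μ₁] [IsFiniteMeasure μ₂] :
    MemLp (fun u => sqrtRnDeriv μ₁ Λ u - sqrtRnDeriv μ₂ Λ u) 2 Λ := by
  have hmeas : Measurable fun u => sqrtRnDeriv μ₁ Λ u - sqrtRnDeriv μ₂ Λ u :=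
    measurable_sqrtRnDeriv.sub measurable_sqrtRnDeriv
  refine (memLp_two_iff_integrable_sq hmeas.aestronglyMeasurable).2 ?_
  refine ((Measure.integrable_toReal_rnDeriv (μ := μ₁) (ν := Λ)).add
    (Measure.integrable_toReal_rnDeriv (μ := μ₂))).mono
    (hmeas.pow_const 2).aestronglyMeasurable (ae_of_all _ fun u => ?_)
  simp only [Pi.add_apply, Real.norm_eq_abs, abs_pow, sq_abs, ← sq_sqrtRnDeriv]
  rw [abs_of_nonneg (by positivity)]
  -- `(a - b)² ≤ a² + b²` for `a, b ≥ 0`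
  nlinarith [mul_nonneg (sqrtRnDeriv_nonneg (μ := μ₁) (Λ := Λ) u)
    (sqrtRnDeriv_nonneg (μ := μ₂) (Λ := Λ) u)]

lemma sq_mul_sqrtRnDeriv_add_le (x : ℝ) (u : X) :
    (x * (sqrtRnDeriv μ₁ Λ u + sqrtRnDeriv μ₂ Λ u)) ^ 2 ≤
      2 * ((μ₁.rnDeriv Λ u).toReal * x ^ 2 + (μ₂.rnDeriv Λ u).toReal * x ^ 2) := by
  rw [← sq_sqrtRnDeriv, ← sq_sqrtRnDeriv]
  nlinarith [sq_nonneg (x * (sqrtRnDeriv μ₁ Λ u - sqrtRnDeriv μ₂ Λ u))]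

section RadonNikodym

variable [SigmaFinite Λ] [SigmaFinite μ₁] [SigmaFinite μ₂] {h : X → ℝ}

lemma integral_sub_eq_integral_mul_sqrtRnDeriv_sub (hac₁ : μ₁ ≪ Λ) (hac₂ : μ₂ ≪ Λ)
    (hh₁ : Integrable h μ₁) (hh₂ : Integrable h μ₂) :
    (∫ u, h u ∂μ₁) - ∫ u, h u ∂μ₂ = ∫ u, h u * (sqrtRnDeriv μ₁ Λ u + sqrtRnDeriv μ₂ Λ u) *
      (sqrtRnDeriv μ₁ Λ u - sqrtRnDeriv μ₂ Λ u) ∂Λ := by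
  rw [← integral_toReal_rnDeriv_mul hac₁, ← integral_toReal_rnDeriv_mul hac₂,
    ← integral_sub ((integrable_toReal_rnDeriv_mul_iff hac₁).2 hh₁)
      ((integrable_toReal_rnDeriv_mul_iff hac₂).2 hh₂)]
  congr 1 with u
  rw [← sq_sqrtRnDeriv, ← sq_sqrtRnDeriv]
  ring

lemma integrable_rnDeriv_mul_sq_add (hac₁ : μ₁ ≪ Λ) (hac₂ : μ₂ ≪ Λ)
    (hsq₁ : Integrable (fun u => h u ^ 2) μ₁) (hsq₂ : Integrable (fun u => h u ^ 2) μ₂) :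
    Integrable (fun u => 2 * ((μ₁.rnDeriv Λ u).toReal * h u ^ 2 +
      (μ₂.rnDeriv Λ u).toReal * h u ^ 2)) Λ :=
  (((integrable_toReal_rnDeriv_mul_iff hac₁).2 hsq₁).add
    ((integrable_toReal_rnDeriv_mul_iff hac₂).2 hsq₂)).const_mul 2

lemma memLp_mul_sqrtRnDeriv_add (hac₁ : μ₁ ≪ Λ) (hac₂ : μ₂ ≪ Λ) (hh : Measurable h)
    (hsq₁ : Integrable (fun u => h u ^ 2) μ₁) (hsq₂ : Integrable (fun u => h u ^ 2) μ₂) :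
    MemLp (fun u => h u * (sqrtRnDeriv μ₁ Λ u + sqrtRnDeriv μ₂ Λ u)) 2 Λ := by
  have hmeas : Measurable fun u => h u * (sqrtRnDeriv μ₁ Λ u + sqrtRnDeriv μ₂ Λ u) :=
    hh.mul (measurable_sqrtRnDeriv.add measurable_sqrtRnDeriv)
  refine (memLp_two_iff_integrable_sq hmeas.aestronglyMeasurable).2 <|
    (integrable_rnDeriv_mul_sq_add hac₁ hac₂ hsq₁ hsq₂).mono
      (hmeas.pow_const 2).aestronglyMeasurable (ae_of_all _ fun u => ?_)
  rw [Real.norm_of_nonneg (sq_nonneg _), Real.norm_of_nonneg (by positivity)]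
  exact sq_mul_sqrtRnDeriv_add_le (h u) u

lemma integral_sq_mul_sqrtRnDeriv_add_le (hac₁ : μ₁ ≪ Λ) (hac₂ : μ₂ ≪ Λ)
    (hsq₁ : Integrable (fun u => h u ^ 2) μ₁) (hsq₂ : Integrable (fun u => h u ^ 2) μ₂) :
    ∫ u, (h u * (sqrtRnDeriv μ₁ Λ u + sqrtRnDeriv μ₂ Λ u)) ^ 2 ∂Λ ≤
      2 * ((∫ u, h u ^ 2 ∂μ₁) + ∫ u, h u ^ 2 ∂μ₂) :=
  calc ∫ u, (h u * (sqrtRnDeriv μ₁ Λ u + sqrtRnDeriv μ₂ Λ u)) ^ 2 ∂Λ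
      ≤ ∫ u, 2 * ((μ₁.rnDeriv Λ u).toReal * h u ^ 2 + (μ₂.rnDeriv Λ u).toReal * h u ^ 2) ∂Λ :=
        integral_mono_of_nonneg (ae_of_all _ fun u => sq_nonneg _)
          (integrable_rnDeriv_mul_sq_add hac₁ hac₂ hsq₁ hsq₂)
          (ae_of_all _ fun u => sq_mul_sqrtRnDeriv_add_le (h u) u)
    _ = 2 * ((∫ u, h u ^ 2 ∂μ₁) + ∫ u, h u ^ 2 ∂μ₂) := by
        rw [integral_const_mul, integral_add ((integrable_toReal_rnDeriv_mul_iff hac₁).2 hsq₁)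
          ((integrable_toReal_rnDeriv_mul_iff hac₂).2 hsq₂), integral_toReal_rnDeriv_mul hac₁,
          integral_toReal_rnDeriv_mul hac₂]

end RadonNikodym

end

/-- If `μ₁, μ₂` are probability measures absolutely continuous with respect to a σ-finite
measure `Λ`, and `h` is square integrable with respect to both, then
`|∫ h dμ₁ − ∫ h dμ₂| ≤ 2 (∫ h² dμ₁ + ∫ h² dμ₂)^{1/2} d_H(μ₁, μ₂)`. -/
theorem abs_integral_sub_le_hellinger
    {X : Type*} [MeasurableSpace X] (Λ μ₁ μ₂ : Measure X) [SigmaFinite Λ]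
    [IsProbabilityMeasure μ₁] [IsProbabilityMeasure μ₂]
    (hac₁ : μ₁ ≪ Λ) (hac₂ : μ₂ ≪ Λ)
    (h : X → ℝ) (hmeas : Measurable h)
    (hsq₁ : Integrable (fun u => (h u) ^ 2) μ₁)
    (hsq₂ : Integrable (fun u => (h u) ^ 2) μ₂) :
    |(∫ u, h u ∂μ₁) - ∫ u, h u ∂μ₂| ≤
      2 * Real.sqrt ((∫ u, (h u) ^ 2 ∂μ₁) + ∫ u, (h u) ^ 2 ∂μ₂) *
        hellingerDist μ₁ μ₂ Λ := by
  have hh₁ : Integrable h μ₁ :=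
    ((memLp_two_iff_integrable_sq hmeas.aestronglyMeasurable).2 hsq₁).integrable one_le_two
  have hh₂ : Integrable h μ₂ :=
    ((memLp_two_iff_integrable_sq hmeas.aestronglyMeasurable).2 hsq₂).integrable one_le_two
  set S := (∫ u, h u ^ 2 ∂μ₁) + ∫ u, h u ^ 2 ∂μ₂
  rw [integral_sub_eq_integral_mul_sqrtRnDeriv_sub hac₁ hac₂ hh₁ hh₂]
  calc _ ≤ √(∫ u, (h u * (sqrtRnDeriv μ₁ Λ u + sqrtRnDeriv μ₂ Λ u)) ^ 2 ∂Λ) *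
          √(∫ u, (sqrtRnDeriv μ₁ Λ u - sqrtRnDeriv μ₂ Λ u) ^ 2 ∂Λ) :=
        abs_integral_mul_le_sqrt_mul_sqrt (memLp_mul_sqrtRnDeriv_add hac₁ hac₂ hmeas hsq₁ hsq₂)
          memLp_sqrtRnDeriv_sub
    _ ≤ √(2 * S) * √(2 * hellingerDist μ₁ μ₂ Λ ^ 2) := by
        rw [two_mul_hellingerDist_sq]
        gcongr
        exact integral_sq_mul_sqrtRnDeriv_add_le hac₁ hac₂ hsq₁ hsq₂
    _ = 2 * √S * hellingerDist μ₁ μ₂ Λ := by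
        rw [Real.sqrt_mul zero_le_two, Real.sqrt_mul zero_le_two,
          Real.sqrt_sq hellingerDist_nonneg]
        linear_combination √S * hellingerDist μ₁ μ₂ Λ * Real.mul_self_sqrt zero_le_two
end

section
/- Let X and Y be Banach spaces, y ∈ Y fixed, and μ₀ a Borel probability measure on X with ∫_X exp(κ‖u‖_X) dμ₀(u) < ∞ for some κ > 0. Suppose Φ(·;y) : X → ℝ is continuous and satisfies: (i) there exist α₁ with 0 ≤ α₁ ≤ κ and M ∈ ℝ such that Φ(u;y) ≥ M − α₁‖u‖_X for all u ∈ X; (ii) for every r > 0 there is K(r) > 0 such that Φ(u;y) ≤ K(r) whenever ‖u‖_X < r. Then Z(y) := ∫_X exp(−Φ(u;y)) dμ₀(u) satisfies 0 < Z(y) < ∞, and hence the posterior measure μ^y with dμ^y/dμ₀(u) = Z(y)^{-1} exp(−Φ(u;y)) is a well-defined Borel probability measure on X, absolutely continuous with respect to μ₀. -/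
/-!
The lower bound `Φ(u) ≥ M - α₁‖u‖` with `α₁ ≤ κ` dominates `exp(-Φ)` by `exp(-M) exp(κ‖u‖)`,
which is `μ₀`-integrable, so `Z < ∞`; and `Z > 0` because `exp(-Φ) > 0` and `μ₀ ≠ 0`.
The posterior is then the exponential tilt of `μ₀` by `-Φ`, a probability measure with a
density with respect to `μ₀`.
-/

open MeasureTheory

/-- The posterior measure `μ^y` associated with a prior `μ₀` and likelihood potential `Φ`,
defined via Bayes' rule: `dμ^y/dμ₀(u) = Z⁻¹ exp(−Φ(u))` with
`Z = ∫ exp(−Φ(u)) dμ₀(u)`. -/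
noncomputable def posteriorMeasure {X : Type*} [MeasurableSpace X]
    (μ₀ : Measure X) (Φ : X → ℝ) : Measure X :=
  μ₀.withDensity fun u =>
    ENNReal.ofReal ((∫ v, Real.exp (-(Φ v)) ∂μ₀)⁻¹ * Real.exp (-(Φ u)))

lemma posteriorMeasure_eq_tilted {X : Type*} [MeasurableSpace X] (μ₀ : Measure X)
    (Φ : X → ℝ) : posteriorMeasure μ₀ Φ = μ₀.tilted fun u => -Φ u := by
  simp only [posteriorMeasure, Measure.tilted, div_eq_inv_mul]

lemma integrable_exp_neg_of_sub_mul_norm_le {X : Type*} [SeminormedAddGroup X]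
    [MeasurableSpace X] {μ : Measure X} {f : X → ℝ} {κ α M : ℝ}
    (hf : AEStronglyMeasurable f μ) (hexp : Integrable (fun u => Real.exp (κ * ‖u‖)) μ)
    (hακ : α ≤ κ) (hlb : ∀ u, M - α * ‖u‖ ≤ f u) :
    Integrable (fun u => Real.exp (-f u)) μ := by
  refine (hexp.const_mul (Real.exp (-M))).mono
    (Real.continuous_exp.comp_aestronglyMeasurable hf.neg) (Filter.Eventually.of_forall ?_)
  intro u
  have hexponent : -f u ≤ -M + κ * ‖u‖ := by
    nlinarith [hlb u, norm_nonneg u]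
  rw [Real.norm_of_nonneg (Real.exp_pos _).le, Real.norm_of_nonneg (by positivity),
    ← Real.exp_add]
  exact Real.exp_le_exp.2 hexponent

theorem posterior_well_defined_general
    {X Y : Type*} [NormedAddCommGroup X]
    [MeasurableSpace X] [BorelSpace X]
    (μ₀ : Measure X) [IsProbabilityMeasure μ₀]
    (κ : ℝ)
    (hexp : Integrable (fun u => Real.exp (κ * ‖u‖)) μ₀)
    (Φ : X → Y → ℝ) (y : Y)
    (hcont : Continuous fun u => Φ u y)
    (α₁ M : ℝ) (hα₁κ : α₁ ≤ κ)
    (hlb : ∀ u : X, M - α₁ * ‖u‖ ≤ Φ u y) :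
    Integrable (fun u => Real.exp (-(Φ u y))) μ₀ ∧
    0 < ∫ u, Real.exp (-(Φ u y)) ∂μ₀ ∧
    IsProbabilityMeasure (posteriorMeasure μ₀ fun u => Φ u y) ∧
    (posteriorMeasure μ₀ fun u => Φ u y) ≪ μ₀ := by
  have hint : Integrable (fun u => Real.exp (-(Φ u y))) μ₀ :=
    integrable_exp_neg_of_sub_mul_norm_le hcont.aestronglyMeasurable hexp hα₁κ hlb
  rw [posteriorMeasure_eq_tilted]
  exact ⟨hint, integral_exp_pos hint, isProbabilityMeasure_tilted hint,
    tilted_absolutelyContinuous _ _⟩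

/-- Existence and uniqueness of the posterior: if the prior `μ₀` has exponential tails
(`∫ exp(κ‖u‖) dμ₀ < ∞` for some `κ > 0`), and the likelihood potential `Φ(·;y)` is
continuous, bounded below by `M − α₁‖u‖` with `0 ≤ α₁ ≤ κ`, and bounded above on bounded
sets, then `0 < Z(y) < ∞` and the posterior is a well-defined probability measure,
absolutely continuous with respect to `μ₀`. -/
theorem posterior_well_defined
    {X Y : Type*} [NormedAddCommGroup X] [NormedSpace ℝ X] [CompleteSpace X]
    [MeasurableSpace X] [BorelSpace X]
    [NormedAddCommGroup Y] [NormedSpace ℝ Y] [CompleteSpace Y]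
    (μ₀ : Measure X) [IsProbabilityMeasure μ₀]
    (κ : ℝ) (hκ : 0 < κ)
    (hexp : Integrable (fun u => Real.exp (κ * ‖u‖)) μ₀)
    (Φ : X → Y → ℝ) (y : Y)
    (hcont : Continuous fun u => Φ u y)
    (α₁ M : ℝ) (hα₁ : 0 ≤ α₁) (hα₁κ : α₁ ≤ κ)
    (hlb : ∀ u : X, M - α₁ * ‖u‖ ≤ Φ u y)
    (hub : ∀ r > (0 : ℝ), ∃ K > (0 : ℝ), ∀ u : X, ‖u‖ < r → Φ u y ≤ K) :
    Integrable (fun u => Real.exp (-(Φ u y))) μ₀ ∧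
    0 < ∫ u, Real.exp (-(Φ u y)) ∂μ₀ ∧
    IsProbabilityMeasure (posteriorMeasure μ₀ fun u => Φ u y) ∧
    (posteriorMeasure μ₀ fun u => Φ u y) ≪ μ₀ :=
  posterior_well_defined_general μ₀ κ hexp Φ y hcont α₁ M hα₁κ hlb
end

section
/- Let X and Y be Banach spaces, r > 0, and μ₀ a Borel probability measure on X with ∫_X exp((α₁ + α₂)‖u‖_X) dμ₀(u) < ∞, where α₁, α₂ ≥ 0. Suppose Φ : X × Y → ℝ is measurable in u and satisfies: (i) there is M ∈ ℝ such that Φ(u;y) ≥ M − α₁‖u‖_X for all u ∈ X and all y with ‖y‖_Y < r; (ii) there is C ∈ ℝ such that |Φ(u;y₁) − Φ(u;y₂)| ≤ exp(α₂‖u‖_X + C) ‖y₁ − y₂‖_Y for all u ∈ X and all y₁, y₂ with ‖y₁‖_Y, ‖y₂‖_Y < r. Then for the normalizing constants Z(y) = ∫_X exp(−Φ(u;y)) dμ₀(u) one has |Z(y) − Z(y')| ≤ exp(C − M) (∫_X exp((α₁ + α₂)‖u‖_X) dμ₀(u)) ‖y − y'‖_Y for all y, y' with ‖y‖_Y, ‖y'‖_Y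 < r. -/
/-!
On `(-∞, c]` the exponential is `exp c`-Lipschitz. The lower bound `Φ ≥ M - α₁‖u‖` places
`-Φ(u;y)` in `(-∞, α₁‖u‖ - M]`, so the Lipschitz bound on `Φ` becomes the pointwise bound
`|e^{-Φ(u;y)} - e^{-Φ(u;y')}| ≤ e^{C-M} e^{(α₁+α₂)‖u‖} ‖y - y'‖`, whose right-hand side is
integrable; integrating it gives the estimate. The same bound shows that `e^{-Φ(·;y)}` and
`e^{-Φ(·;y')}` are integrable or not together, and in the latter case both integrals are `0`.
-/

open MeasureTheory

theorem Real.abs_exp_sub_exp_le_of_le {x y c : ℝ} (hx : x ≤ c) (hy : y ≤ c) :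
    |Real.exp x - Real.exp y| ≤ Real.exp c * |x - y| := by
  simpa only [Real.norm_eq_abs] using
    (convex_Iic c).norm_image_sub_le_of_norm_deriv_le
      (fun z _ ↦ Real.differentiableAt_exp)
      (fun z hz ↦ by
        rw [Real.deriv_exp, Real.norm_eq_abs, abs_of_pos (Real.exp_pos z)]
        exact Real.exp_le_exp.2 hz) hy hx

theorem norm_integral_sub_integral_le_of_norm_sub_le {α E : Type*} [MeasurableSpace α]
    {μ : Measure α} [NormedAddCommGroup E] [NormedSpace ℝ E] {f g : α → E} {h : α → ℝ}
    (hf : AEStronglyMeasurable f μ) (hg : AEStronglyMeasurable g μ) (hh : Integrable h μ)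
    (hfg : ∀ᵐ x ∂μ, ‖f x - g x‖ ≤ h x) :
    ‖∫ x, f x ∂μ - ∫ x, g x ∂μ‖ ≤ ∫ x, h x ∂μ := by
  have hsub : Integrable (f - g) μ := hh.mono' (hf.sub hg) hfg
  by_cases hfi : Integrable f μ
  · have hgi : Integrable g μ := by simpa using hfi.sub hsub
    rw [← integral_sub hfi hgi]
    exact norm_integral_le_of_norm_le hh hfg
  · have hgi : ¬Integrable g μ := fun hgi ↦ hfi (by simpa using hgi.add hsub)
    rw [integral_undef hfi, integral_undef hgi, sub_zero, norm_zero]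
    exact integral_nonneg_of_ae (hfg.mono fun x hx ↦ (norm_nonneg _).trans hx)

theorem abs_exp_neg_sub_exp_neg_le {a b M C α₁ α₂ t d : ℝ}
    (ha : M - α₁ * t ≤ a) (hb : M - α₁ * t ≤ b) (hab : |a - b| ≤ Real.exp (α₂ * t + C) * d) :
    |Real.exp (-a) - Real.exp (-b)| ≤ Real.exp (C - M) * Real.exp ((α₁ + α₂) * t) * d :=
  calc |Real.exp (-a) - Real.exp (-b)|
      ≤ Real.exp (α₁ * t - M) * |a - b| := by
        simpa only [neg_sub_neg, abs_sub_comm b a] using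
          Real.abs_exp_sub_exp_le_of_le (x := -a) (y := -b) (c := α₁ * t - M)
            (by linarith) (by linarith)
    _ ≤ Real.exp (α₁ * t - M) * (Real.exp (α₂ * t + C) * d) := by gcongr
    _ = Real.exp (C - M) * Real.exp ((α₁ + α₂) * t) * d := by
        rw [← mul_assoc, ← Real.exp_add, ← Real.exp_add]
        congr 2
        ring

theorem normalizing_constant_lipschitz_general
    {X Y : Type*} [NormedAddCommGroup X]
    [MeasurableSpace X]
    [NormedAddCommGroup Y]
    (μ₀ : Measure X)
    (α₁ α₂ : ℝ)
    (hexp : Integrable (fun u => Real.exp ((α₁ + α₂) * ‖u‖)) μ₀)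
    (r : ℝ)
    (Φ : X → Y → ℝ) (hmeas : ∀ y : Y, Measurable fun u => Φ u y)
    (M : ℝ)
    (hlb : ∀ u : X, ∀ y : Y, ‖y‖ < r → M - α₁ * ‖u‖ ≤ Φ u y)
    (C : ℝ)
    (hlip : ∀ u : X, ∀ y₁ y₂ : Y, ‖y₁‖ < r → ‖y₂‖ < r →
      |Φ u y₁ - Φ u y₂| ≤ Real.exp (α₂ * ‖u‖ + C) * ‖y₁ - y₂‖) :
    ∀ y y' : Y, ‖y‖ < r → ‖y'‖ < r →
      |(∫ u, Real.exp (-(Φ u y)) ∂μ₀) - ∫ u, Real.exp (-(Φ u y')) ∂μ₀| ≤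
        Real.exp (C - M) * (∫ u, Real.exp ((α₁ + α₂) * ‖u‖) ∂μ₀) * ‖y - y'‖ := by
  intro y y' hy hy'
  have hmeas_exp : ∀ z, AEStronglyMeasurable (fun u => Real.exp (-(Φ u z))) μ₀ :=
    fun z ↦ (hmeas z).neg.exp.aestronglyMeasurable
  calc |(∫ u, Real.exp (-(Φ u y)) ∂μ₀) - ∫ u, Real.exp (-(Φ u y')) ∂μ₀|
      ≤ ∫ u, Real.exp (C - M) * Real.exp ((α₁ + α₂) * ‖u‖) * ‖y - y'‖ ∂μ₀ :=
        norm_integral_sub_integral_le_of_norm_sub_le (hmeas_exp y) (hmeas_exp y')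
          ((hexp.const_mul _).mul_const _)
          (.of_forall fun u ↦ abs_exp_neg_sub_exp_neg_le (hlb u y hy) (hlb u y' hy')
            (hlip u y y' hy hy'))
    _ = Real.exp (C - M) * (∫ u, Real.exp ((α₁ + α₂) * ‖u‖) ∂μ₀) * ‖y - y'‖ := by
        rw [integral_mul_const, integral_const_mul]

/-- Lipschitz continuity of the normalizing constant `Z(y) = ∫ exp(−Φ(u;y)) dμ₀(u)` with
respect to the data: under a lower bound `Φ(u;y) ≥ M − α₁‖u‖` and a local Lipschitz
estimate in `y` with constant `exp(α₂‖u‖ + C)`, and assuming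
`∫ exp((α₁+α₂)‖u‖) dμ₀ < ∞`, one has
`|Z(y) − Z(y')| ≤ exp(C − M) (∫ exp((α₁+α₂)‖u‖) dμ₀) ‖y − y'‖`. -/
theorem normalizing_constant_lipschitz
    {X Y : Type*} [NormedAddCommGroup X] [NormedSpace ℝ X] [CompleteSpace X]
    [MeasurableSpace X] [BorelSpace X]
    [NormedAddCommGroup Y] [NormedSpace ℝ Y] [CompleteSpace Y]
    (μ₀ : Measure X) [IsProbabilityMeasure μ₀]
    (α₁ α₂ : ℝ) (hα₁ : 0 ≤ α₁) (hα₂ : 0 ≤ α₂)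
    (hexp : Integrable (fun u => Real.exp ((α₁ + α₂) * ‖u‖)) μ₀)
    (r : ℝ) (hr : 0 < r)
    (Φ : X → Y → ℝ) (hmeas : ∀ y : Y, Measurable fun u => Φ u y)
    (M : ℝ)
    (hlb : ∀ u : X, ∀ y : Y, ‖y‖ < r → M - α₁ * ‖u‖ ≤ Φ u y)
    (C : ℝ)
    (hlip : ∀ u : X, ∀ y₁ y₂ : Y, ‖y₁‖ < r → ‖y₂‖ < r →
      |Φ u y₁ - Φ u y₂| ≤ Real.exp (α₂ * ‖u‖ + C) * ‖y₁ - y₂‖) :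
    ∀ y y' : Y, ‖y‖ < r → ‖y'‖ < r →
      |(∫ u, Real.exp (-(Φ u y)) ∂μ₀) - ∫ u, Real.exp (-(Φ u y')) ∂μ₀| ≤
        Real.exp (C - M) * (∫ u, Real.exp ((α₁ + α₂) * ‖u‖) ∂μ₀) * ‖y - y'‖ :=
  normalizing_constant_lipschitz_general μ₀ α₁ α₂ hexp r Φ hmeas M hlb C hlip
end

section
/- Let X and Y be Banach spaces and μ₀ a Borel probability measure on X satisfying ∫_X exp(κ‖u‖_X) dμ₀(u) < ∞ for a constant κ > 0. Suppose Φ : X × Y → ℝ is measurable in u and there are α₁, α₂ ≥ 0 with κ ≥ α₁ + 2α₂ such that: (i) for every r > 0 there is M(r) ∈ ℝ with Φ(u;y) ≥ M − α₁‖u‖_X for all u ∈ X and all y with ‖y‖_Y < r; (ii) for every r > 0 there is K(r) > 0 with Φ(u;y) ≤ K whenever max(‖u‖_X, ‖y‖_Y) < r; (iii) for every r > 0 there is C(r) ∈ ℝ with |Φ(u;y₁) − Φ(u;y₂)| ≤ exp(α₂‖u‖_X + C) ‖y₁ − y₂‖_Y for all u ∈ X and all y₁, y₂ with ‖y₁‖_Y,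 ‖y₂‖_Y < r. Then for every r > 0 there exists a constant C(r) > 0 such that for all y, y' ∈ Y with max(‖y‖_Y, ‖y'‖_Y) < r, the posterior measures μ^y and μ^{y'} are well-defined and d_H(μ^y, μ^{y'}) ≤ C ‖y − y'‖_Y. -/
/-!
For `‖y‖, ‖y'‖ < r`, the lower bound on `Φ` dominates `exp (-Φ(u; y))` by `exp (α₁‖u‖ - M)`, and
the upper bound on a ball of positive prior mass bounds the normalising constants `Z(y)` below by
some `m > 0`. With `√(dμ^y/dμ₀) = Z(y)^(-1/2) exp (-Φ(·; y)/2)`, the squared Hellinger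
integrand is at most
`2 Z(y)⁻¹(exp (-Φ(u; y)/2) - exp (-Φ(u; y')/2))² + 2 (Z(y)^(-1/2) - Z(y')^(-1/2))² exp (-Φ(u; y'))`.
The bound `|eˢ - eᵗ| ≤ max eˢ eᵗ |s - t|` and the Lipschitz condition control the first term by
`exp ((α₁ + 2α₂)‖u‖) ‖y - y'‖²`, and, integrated, give `|Z(y) - Z(y')| ≲ ‖y - y'‖`, which controls
the second. Since `κ ≥ α₁ + 2α₂`, all these weights are integrable against `μ₀`.
-/

open MeasureTheory

open Real

lemma abs_exp_sub_exp_le_max_mul_abs (s t : ℝ) :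
    |exp s - exp t| ≤ max (exp s) (exp t) * |s - t| := by
  wlog hts : t ≤ s generalizing s t
  · simpa only [abs_sub_comm, max_comm] using this t s (le_of_not_ge hts)
  have h := add_one_le_exp (t - s)
  rw [exp_sub, le_div_iff₀ (exp_pos s)] at h
  rw [abs_of_nonneg (sub_nonneg.2 (exp_le_exp.2 hts)), abs_of_nonneg (sub_nonneg.2 hts),
    max_eq_left (exp_le_exp.2 hts)]
  linarith

lemma abs_exp_neg_sub_exp_neg_le_s3 {s t ℓ g : ℝ} (hs : exp (-s) ≤ ℓ) (ht : exp (-t) ≤ ℓ)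
    (hst : |s - t| ≤ g) : |exp (-s) - exp (-t)| ≤ ℓ * g :=
  calc |exp (-s) - exp (-t)| ≤ max (exp (-s)) (exp (-t)) * |-s - -t| :=
        abs_exp_sub_exp_le_max_mul_abs _ _
    _ ≤ ℓ * g := by
        rw [neg_sub_neg, abs_sub_comm]
        exact mul_le_mul (max_le hs ht) hst (abs_nonneg _) ((exp_nonneg _).trans hs)

lemma sq_exp_neg_half_sub_exp_neg_half_le {s t ℓ g : ℝ} (hs : exp (-s) ≤ ℓ)
    (ht : exp (-t) ≤ ℓ) (hst : |s - t| ≤ g) :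
    (exp (-s / 2) - exp (-t / 2)) ^ 2 ≤ ℓ * g ^ 2 / 4 := by
  have hℓ : 0 ≤ ℓ := (exp_nonneg _).trans hs
  have half {r : ℝ} (hr : exp (-r) ≤ ℓ) : exp (-(r / 2)) ≤ √ℓ := by
    rwa [le_sqrt (exp_nonneg _) hℓ, ← exp_nat_mul, Nat.cast_two, mul_neg,
      mul_div_cancel₀ _ two_ne_zero]
  have h := abs_exp_neg_sub_exp_neg_le_s3 (half hs) (half ht) (g := g / 2)
    (by rwa [← sub_div, abs_div, abs_two, div_le_div_iff_of_pos_right two_pos])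
  rw [neg_div, neg_div, ← sq_abs]
  calc |exp (-(s / 2)) - exp (-(t / 2))| ^ 2 ≤ (√ℓ * (g / 2)) ^ 2 :=
        pow_le_pow_left₀ (abs_nonneg _) h 2
    _ = ℓ * g ^ 2 / 4 := by rw [mul_pow, sq_sqrt hℓ]; ring

lemma sq_inv_sub_inv_le {a b c : ℝ} (hc : 0 < c) (ha : c ≤ a) (hb : c ≤ b) :
    (a⁻¹ - b⁻¹) ^ 2 ≤ (a ^ 2 - b ^ 2) ^ 2 / (4 * c ^ 6) := by
  have ha0 : 0 < a := hc.trans_le ha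
  have hb0 : 0 < b := hc.trans_le hb
  have hab : 2 * c ^ 3 ≤ (a + b) * (a * b) :=
    calc 2 * c ^ 3 = (c + c) * (c * c) := by ring
      _ ≤ (a + b) * (a * b) := by gcongr
  calc (a⁻¹ - b⁻¹) ^ 2 = (b - a) ^ 2 * (a + b) ^ 2 / ((a + b) * (a * b)) ^ 2 := by
        field_simp
    _ ≤ (b - a) ^ 2 * (a + b) ^ 2 / (2 * c ^ 3) ^ 2 := by gcongr
    _ = (a ^ 2 - b ^ 2) ^ 2 / (4 * c ^ 6) := by ring

lemma sq_inv_sqrt_sub_inv_sqrt_le {m z w : ℝ} (hm : 0 < m) (hz : m ≤ z) (hw : m ≤ w) :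
    ((√z)⁻¹ - (√w)⁻¹) ^ 2 ≤ (z - w) ^ 2 / (4 * m ^ 3) := by
  have h := sq_inv_sub_inv_le (sqrt_pos.2 hm) (sqrt_le_sqrt hz) (sqrt_le_sqrt hw)
  rwa [sq_sqrt (hm.le.trans hz), sq_sqrt (hm.le.trans hw), show (6 : ℕ) = 2 * 3 from rfl,
    pow_mul, sq_sqrt hm.le] at h

section PosteriorDensity

variable {X : Type*} [MeasurableSpace X] {μ : Measure X}

lemma MeasureTheory.Integrable.exp_of_le_add {w φ : X → ℝ} {b : ℝ}
    (hw : Integrable (fun u => exp (w u)) μ) (hφ : Measurable φ) (h : ∀ u, φ u ≤ w u + b) :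
    Integrable (fun u => exp (φ u)) μ := by
  refine (hw.const_mul (exp b)).mono' hφ.exp.aestronglyMeasurable (ae_of_all _ fun u => ?_)
  rw [norm_of_nonneg (exp_nonneg _), ← exp_add]
  exact exp_le_exp.2 (by linarith [h u])

lemma integrable_exp_neg_of_le {Φ L : X → ℝ} (hΦ : Measurable Φ) (hL : Integrable L μ)
    (hΦL : ∀ u, exp (-Φ u) ≤ L u) : Integrable (fun u => exp (-Φ u)) μ :=
  hL.mono' hΦ.neg.exp.aestronglyMeasurable
    (ae_of_all _ fun u => by rw [norm_of_nonneg (exp_nonneg _)]; exact hΦL u)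

lemma exp_neg_mul_measureReal_le_integral_exp_neg [IsFiniteMeasure μ] {Φ : X → ℝ} {s : Set X}
    {K : ℝ} (hs : MeasurableSet s) (hΦ : Integrable (fun u => exp (-Φ u)) μ)
    (hK : ∀ u ∈ s, Φ u ≤ K) : exp (-K) * μ.real s ≤ ∫ u, exp (-Φ u) ∂μ :=
  calc exp (-K) * μ.real s ≤ ∫ u in s, exp (-Φ u) ∂μ :=
        setIntegral_ge_of_const_le_real hs (measure_ne_top μ s)
          (fun u hu => exp_le_exp.2 (neg_le_neg (hK u hu))) hΦ.integrableOn
    _ ≤ ∫ u, exp (-Φ u) ∂μ := setIntegral_le_integral hΦ (ae_of_all _ fun _ => exp_nonneg _)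

noncomputable def posteriorDensity (μ : Measure X) (Φ : X → ℝ) (u : X) : ℝ :=
  (∫ v, exp (-Φ v) ∂μ)⁻¹ * exp (-Φ u)

lemma posteriorDensity_nonneg (Φ : X → ℝ) (u : X) : 0 ≤ posteriorDensity μ Φ u :=
  mul_nonneg (inv_nonneg.2 (integral_nonneg fun _ => exp_nonneg _)) (exp_nonneg _)

lemma sqrt_posteriorDensity (Φ : X → ℝ) (u : X) :
    √(posteriorDensity μ Φ u) = (√(∫ v, exp (-Φ v) ∂μ))⁻¹ * exp (-Φ u / 2) := by
  rw [posteriorDensity, sqrt_mul (inv_nonneg.2 (integral_nonneg fun _ => exp_nonneg _)),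
    sqrt_inv, ← exp_half]

lemma posteriorMeasure_eq_withDensity (μ : Measure X) (Φ : X → ℝ) :
    posteriorMeasure μ Φ = μ.withDensity fun u => ENNReal.ofReal (posteriorDensity μ Φ u) :=
  rfl

lemma toReal_rnDeriv_posteriorMeasure [SigmaFinite μ] {Φ : X → ℝ} (hΦ : Measurable Φ) :
    ∀ᵐ u ∂μ, ((posteriorMeasure μ Φ).rnDeriv μ u).toReal = posteriorDensity μ Φ u := by
  have hp : Measurable (posteriorDensity μ Φ) := hΦ.neg.exp.const_mul _
  filter_upwards [Measure.rnDeriv_withDensity μ hp.ennreal_ofReal] with u hu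
  rw [posteriorMeasure_eq_withDensity, hu, ENNReal.toReal_ofReal (posteriorDensity_nonneg Φ u)]

lemma hellingerDist_posteriorMeasure [SigmaFinite μ] {Φ Ψ : X → ℝ} (hΦ : Measurable Φ)
    (hΨ : Measurable Ψ) :
    hellingerDist (posteriorMeasure μ Φ) (posteriorMeasure μ Ψ) μ =
      √(1 / 2 * ∫ u, (√(posteriorDensity μ Φ u) - √(posteriorDensity μ Ψ u)) ^ 2 ∂μ) := by
  rw [hellingerDist, integral_congr_ae]
  filter_upwards [toReal_rnDeriv_posteriorMeasure hΦ, toReal_rnDeriv_posteriorMeasure hΨ]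
    with u hu₁ hu₂
  rw [hu₁, hu₂]

lemma abs_integral_exp_neg_sub_integral_exp_neg_le {Φ Ψ L G : X → ℝ} {δ : ℝ}
    (hΦ : Integrable (fun u => exp (-Φ u)) μ) (hΨ : Integrable (fun u => exp (-Ψ u)) μ)
    (hLG : Integrable (fun u => L u * G u) μ) (hΦL : ∀ u, exp (-Φ u) ≤ L u)
    (hΨL : ∀ u, exp (-Ψ u) ≤ L u) (hΦΨ : ∀ u, |Φ u - Ψ u| ≤ G u * δ) :
    |∫ u, exp (-Φ u) ∂μ - ∫ u, exp (-Ψ u) ∂μ| ≤ (∫ u, L u * G u ∂μ) * δ := by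
  rw [← integral_sub hΦ hΨ, ← integral_mul_const δ]
  refine abs_integral_le_integral_abs.trans (integral_mono_of_nonneg
    (ae_of_all _ fun _ => abs_nonneg _) (hLG.mul_const δ) (ae_of_all _ fun u => ?_))
  exact (abs_exp_neg_sub_exp_neg_le_s3 (hΦL u) (hΨL u) (hΦΨ u)).trans_eq (mul_assoc _ _ _).symm

theorem hellingerDist_posteriorMeasure_le [SigmaFinite μ] {Φ Ψ L G : X → ℝ} {m δ : ℝ}
    (hΦ : Measurable Φ) (hΨ : Measurable Ψ) (hL : Integrable L μ)
    (hLG : Integrable (fun u => L u * G u) μ) (hLG2 : Integrable (fun u => L u * G u ^ 2) μ)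
    (hΦL : ∀ u, exp (-Φ u) ≤ L u) (hΨL : ∀ u, exp (-Ψ u) ≤ L u)
    (hΦΨ : ∀ u, |Φ u - Ψ u| ≤ G u * δ) (hδ : 0 ≤ δ)
    (hm : 0 < m) (hmΦ : m ≤ ∫ u, exp (-Φ u) ∂μ) (hmΨ : m ≤ ∫ u, exp (-Ψ u) ∂μ) :
    hellingerDist (posteriorMeasure μ Φ) (posteriorMeasure μ Ψ) μ ≤
      √((∫ u, L u * G u ^ 2 ∂μ) / (4 * m) +
        (∫ u, L u * G u ∂μ) ^ 2 * (∫ u, L u ∂μ) / (4 * m ^ 3)) * δ := by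
  set I := ∫ u, L u * G u ∂μ
  have hZ := abs_integral_exp_neg_sub_integral_exp_neg_le (integrable_exp_neg_of_le hΦ hL hΦL)
    (integrable_exp_neg_of_le hΨ hL hΨL) hLG hΦL hΨL hΦΨ
  have hpointwise : ∀ u, (√(posteriorDensity μ Φ u) - √(posteriorDensity μ Ψ u)) ^ 2 ≤
      δ ^ 2 / (2 * m) * (L u * G u ^ 2) + I ^ 2 * δ ^ 2 / (2 * m ^ 3) * L u := by
    intro u
    rw [sqrt_posteriorDensity, sqrt_posteriorDensity]
    set a := (√(∫ v, exp (-Φ v) ∂μ))⁻¹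
    set b := (√(∫ v, exp (-Ψ v) ∂μ))⁻¹
    set f := exp (-Φ u / 2)
    set g := exp (-Ψ u / 2)
    have ha : a ^ 2 ≤ m⁻¹ := by
      rw [inv_pow, sq_sqrt (hm.le.trans hmΦ)]
      exact inv_anti₀ hm hmΦ
    have hab : (a - b) ^ 2 ≤ (I * δ) ^ 2 / (4 * m ^ 3) :=
      (sq_inv_sqrt_sub_inv_sqrt_le hm hmΦ hmΨ).trans
        (by gcongr ?_ / _; exact sq_le_sq' (neg_le_of_abs_le hZ) (le_of_abs_le hZ))
    have hfg : (f - g) ^ 2 ≤ L u * (G u * δ) ^ 2 / 4 :=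
      sq_exp_neg_half_sub_exp_neg_half_le (hΦL u) (hΨL u) (hΦΨ u)
    have hg : g ^ 2 ≤ L u := by
      rw [← exp_nat_mul, Nat.cast_two, mul_div_cancel₀ _ two_ne_zero]
      exact hΨL u
    calc (a * f - b * g) ^ 2 = (a * (f - g) + (a - b) * g) ^ 2 := by ring
      _ ≤ 2 * (a ^ 2 * (f - g) ^ 2 + (a - b) ^ 2 * g ^ 2) := by
          rw [← mul_pow, ← mul_pow]
          exact add_sq_le
      _ ≤ 2 * (m⁻¹ * (L u * (G u * δ) ^ 2 / 4) + (I * δ) ^ 2 / (4 * m ^ 3) * L u) := by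
          gcongr
      _ = δ ^ 2 / (2 * m) * (L u * G u ^ 2) + I ^ 2 * δ ^ 2 / (2 * m ^ 3) * L u := by
          field_simp
          ring
  have hintegral : ∫ u, (√(posteriorDensity μ Φ u) - √(posteriorDensity μ Ψ u)) ^ 2 ∂μ ≤
      δ ^ 2 / (2 * m) * (∫ u, L u * G u ^ 2 ∂μ) + I ^ 2 * δ ^ 2 / (2 * m ^ 3) * ∫ u, L u ∂μ := by
    rw [← integral_const_mul, ← integral_const_mul, ← integral_add (hLG2.const_mul _)
      (hL.const_mul _)]
    exact integral_mono_of_nonneg (ae_of_all _ fun _ => sq_nonneg _)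
      ((hLG2.const_mul _).add (hL.const_mul _)) (ae_of_all _ hpointwise)
  rw [hellingerDist_posteriorMeasure hΦ hΨ, ← sqrt_sq hδ, ← sqrt_mul' _ (sq_nonneg δ)]
  refine sqrt_le_sqrt ((mul_le_mul_of_nonneg_left hintegral one_half_pos.le).trans_eq ?_)
  field_simp
  ring

end PosteriorDensity

lemma exists_le_measure_ball_pos {E : Type*} [PseudoMetricSpace E] [MeasurableSpace E]
    (μ : Measure E) [NeZero μ] (x : E) (r : ℝ) : ∃ R, r ≤ R ∧ 0 < μ (Metric.ball x R) := by
  obtain ⟨n, hn⟩ := exists_pos_ball x (NeZero.ne μ)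
  exact ⟨max r n, le_max_left _ _,
    hn.trans_le (measure_mono (Metric.ball_subset_ball (le_max_right _ _)))⟩

theorem posterior_stability_general
    {X Y : Type*} [NormedAddCommGroup X]
    [MeasurableSpace X] [BorelSpace X]
    [NormedAddCommGroup Y]
    (μ₀ : Measure X) [IsProbabilityMeasure μ₀]
    (κ : ℝ)
    (hexp : Integrable (fun u => Real.exp (κ * ‖u‖)) μ₀)
    (Φ : X → Y → ℝ) (hmeas : ∀ y : Y, Measurable fun u => Φ u y)
    (α₁ α₂ : ℝ) (hα₂ : 0 ≤ α₂) (hκα : α₁ + 2 * α₂ ≤ κ)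
    (hlb : ∀ r > (0 : ℝ), ∃ M : ℝ, ∀ u : X, ∀ y : Y, ‖y‖ < r →
      M - α₁ * ‖u‖ ≤ Φ u y)
    (hub : ∀ r > (0 : ℝ), ∃ K > (0 : ℝ), ∀ u : X, ∀ y : Y,
      max ‖u‖ ‖y‖ < r → Φ u y ≤ K)
    (hlip : ∀ r > (0 : ℝ), ∃ C : ℝ, ∀ u : X, ∀ y₁ y₂ : Y, ‖y₁‖ < r → ‖y₂‖ < r →
      |Φ u y₁ - Φ u y₂| ≤ Real.exp (α₂ * ‖u‖ + C) * ‖y₁ - y₂‖) :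
    ∀ r > (0 : ℝ), ∃ C > (0 : ℝ), ∀ y y' : Y, ‖y‖ < r → ‖y'‖ < r →
      (Integrable (fun u => Real.exp (-(Φ u y))) μ₀ ∧
        0 < ∫ u, Real.exp (-(Φ u y)) ∂μ₀ ∧
        Integrable (fun u => Real.exp (-(Φ u y'))) μ₀ ∧
        0 < ∫ u, Real.exp (-(Φ u y')) ∂μ₀) ∧
      hellingerDist (posteriorMeasure μ₀ fun u => Φ u y)
          (posteriorMeasure μ₀ fun u => Φ u y') μ₀ ≤ C * ‖y - y'‖ := by
  intro r hr
  obtain ⟨M, hM⟩ := hlb r hr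
  obtain ⟨c, hc⟩ := hlip r hr
  obtain ⟨R, hrR, hball⟩ := exists_le_measure_ball_pos μ₀ (0 : X) r
  obtain ⟨K, -, hK⟩ := hub R (hr.trans_le hrR)
  set L : X → ℝ := fun u => exp (α₁ * ‖u‖ - M)
  set G : X → ℝ := fun u => exp (α₂ * ‖u‖ + c)
  have hL : Integrable L μ₀ :=
    hexp.exp_of_le_add (by fun_prop) (b := -M) fun u => by nlinarith [norm_nonneg u]
  have hLG : Integrable (fun u => L u * G u) μ₀ := by
    simp only [L, G, ← exp_add]
    exact hexp.exp_of_le_add (by fun_prop) (b := c - M) fun u => by nlinarith [norm_nonneg u]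
  have hLG2 : Integrable (fun u => L u * G u ^ 2) μ₀ := by
    simp only [L, G, sq, ← exp_add]
    exact hexp.exp_of_le_add (by fun_prop) (b := 2 * c - M) fun u => by nlinarith [norm_nonneg u]
  have hΦL {y : Y} (hy : ‖y‖ < r) (u : X) : exp (-Φ u y) ≤ L u :=
    exp_le_exp.2 (by linarith [hM u y hy])
  have hint {y : Y} (hy : ‖y‖ < r) : Integrable (fun u => exp (-Φ u y)) μ₀ :=
    integrable_exp_neg_of_le (hmeas y) hL (hΦL hy)
  set m := exp (-K) * μ₀.real (Metric.ball 0 R)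
  have hm : 0 < m := mul_pos (exp_pos _) (ENNReal.toReal_pos hball.ne' (measure_ne_top _ _))
  have hmZ {y : Y} (hy : ‖y‖ < r) : m ≤ ∫ u, exp (-Φ u y) ∂μ₀ :=
    exp_neg_mul_measureReal_le_integral_exp_neg measurableSet_ball (hint hy)
      fun u hu => hK u y (max_lt (mem_ball_zero_iff.1 hu) (hy.trans_le hrR))
  set A := (∫ u, L u * G u ^ 2 ∂μ₀) / (4 * m) +
    (∫ u, L u * G u ∂μ₀) ^ 2 * (∫ u, L u ∂μ₀) / (4 * m ^ 3)
  refine ⟨√A + 1, by positivity, fun y y' hy hy' =>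
    ⟨⟨hint hy, hm.trans_le (hmZ hy), hint hy', hm.trans_le (hmZ hy')⟩, ?_⟩⟩
  calc _ ≤ √A * ‖y - y'‖ :=
        hellingerDist_posteriorMeasure_le (hmeas y) (hmeas y') hL hLG hLG2 (hΦL hy) (hΦL hy')
          (fun u => hc u y y' hy hy') (norm_nonneg _) hm (hmZ hy) (hmZ hy')
    _ ≤ (√A + 1) * ‖y - y'‖ := by gcongr; linarith

/-- Stability of the posterior with respect to perturbations of the data: if the prior has
exponential tails with constant `κ ≥ α₁ + 2α₂` and `Φ` satisfies the lower bound, local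
upper bound and local Lipschitz-in-`y` conditions, then for every `r > 0` there is
`C(r) > 0` with `d_H(μ^y, μ^{y'}) ≤ C ‖y − y'‖` whenever `‖y‖, ‖y'‖ < r`. -/
theorem posterior_stability
    {X Y : Type*} [NormedAddCommGroup X] [NormedSpace ℝ X] [CompleteSpace X]
    [MeasurableSpace X] [BorelSpace X]
    [NormedAddCommGroup Y] [NormedSpace ℝ Y] [CompleteSpace Y]
    (μ₀ : Measure X) [IsProbabilityMeasure μ₀]
    (κ : ℝ) (hκ : 0 < κ)
    (hexp : Integrable (fun u => Real.exp (κ * ‖u‖)) μ₀)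
    (Φ : X → Y → ℝ) (hmeas : ∀ y : Y, Measurable fun u => Φ u y)
    (α₁ α₂ : ℝ) (hα₁ : 0 ≤ α₁) (hα₂ : 0 ≤ α₂) (hκα : α₁ + 2 * α₂ ≤ κ)
    (hlb : ∀ r > (0 : ℝ), ∃ M : ℝ, ∀ u : X, ∀ y : Y, ‖y‖ < r →
      M - α₁ * ‖u‖ ≤ Φ u y)
    (hub : ∀ r > (0 : ℝ), ∃ K > (0 : ℝ), ∀ u : X, ∀ y : Y,
      max ‖u‖ ‖y‖ < r → Φ u y ≤ K)
    (hlip : ∀ r > (0 : ℝ), ∃ C : ℝ, ∀ u : X, ∀ y₁ y₂ : Y, ‖y₁‖ < r → ‖y₂‖ < r →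
      |Φ u y₁ - Φ u y₂| ≤ Real.exp (α₂ * ‖u‖ + C) * ‖y₁ - y₂‖) :
    ∀ r > (0 : ℝ), ∃ C > (0 : ℝ), ∀ y y' : Y, ‖y‖ < r → ‖y'‖ < r →
      (Integrable (fun u => Real.exp (-(Φ u y))) μ₀ ∧
        0 < ∫ u, Real.exp (-(Φ u y)) ∂μ₀ ∧
        Integrable (fun u => Real.exp (-(Φ u y'))) μ₀ ∧
        0 < ∫ u, Real.exp (-(Φ u y')) ∂μ₀) ∧
      hellingerDist (posteriorMeasure μ₀ fun u => Φ u y)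
          (posteriorMeasure μ₀ fun u => Φ u y') μ₀ ≤ C * ‖y - y'‖ :=
  posterior_stability_general μ₀ κ hexp Φ hmeas α₁ α₂ hα₂ hκα hlb hub hlip
end

section
/- Let X be a Banach space, m a positive integer, Γ an m × m positive definite real matrix, and write ‖v‖_Γ = ‖Γ^{-1/2} v‖₂ for v ∈ ℝ^m. Suppose 𝒢 : X → ℝ^m satisfies: (a) there exist ε > 0 and M ∈ ℝ with ‖𝒢(u)‖_Γ ≤ exp(ε‖u‖_X + M) for all u ∈ X; (b) for every r > 0 there is K(r) > 0 with ‖𝒢(u₁) − 𝒢(u₂)‖_Γ ≤ K‖u₁ − u₂‖_X whenever max(‖u₁‖_X, ‖u₂‖_X) < r. Then the potential Φ(u;y) = (1/2)‖𝒢(u) − y‖_Γ² satisfies: (i) Φ(u;y) ≥ 0 for all u, y; (ii) for every r > 0 there is K(r) > 0 with Φ(u;y) ≤ K whenever max(‖u‖_X, ‖y‖₂) < r; (iii) for every r > 0 there is L(r) > 0 with |Φ(u₁;y) − Φ(u₂;y)| ≤ L‖u₁ − u₂‖_X whenever max(‖u₁‖_X, ‖u₂‖_X, ‖y‖₂) <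 r; (iv) there exists α₂ ≥ 0 such that for every r > 0 there is C(r) ∈ ℝ with |Φ(u;y₁) − Φ(u;y₂)| ≤ exp(α₂‖u‖_X + C)‖y₁ − y₂‖₂ for all u ∈ X and all y₁, y₂ with max(‖y₁‖₂, ‖y₂‖₂) < r. -/
open MeasureTheory Matrix

/-- The Euclidean norm on `ℝ^m`. -/
noncomputable def euclNorm {m : ℕ} (v : Fin m → ℝ) : ℝ :=
  Real.sqrt (∑ i, (v i) ^ 2)

/-- The weighted norm `‖v‖_Γ = ‖Γ^{-1/2} v‖₂` induced by a positive definite matrix `Γ`,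
where `Γ^{-1/2}` is the inverse of the positive definite square root of `Γ`. -/
noncomputable def gammaNorm {m : ℕ} (Γ : Matrix (Fin m) (Fin m) ℝ) (hΓ : Γ.PosDef)
    (v : Fin m → ℝ) : ℝ :=
  euclNorm ((hΓ.posSemidef.1.eigenvectorUnitary.1 *
    diagonal ((↑) ∘ (√·) ∘ hΓ.posSemidef.1.eigenvalues) *
    (star hΓ.posSemidef.1.eigenvectorUnitary : Matrix (Fin m) (Fin m) ℝ))⁻¹ *ᵥ v)

/-! The Γ-norm is a seminorm dominated by a multiple `c` of the Euclidean norm, so all four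
properties follow from the triangle inequality and the factorisation
`½a² - ½b² = ½(a + b)(a - b)`: the bound `‖𝒢(u) - y‖_Γ ≤ exp(ε‖u‖ + M) + c‖y‖₂` controls the
first factor, and the second is at most `‖𝒢(u₁) - 𝒢(u₂)‖_Γ` or `c‖y₁ - y₂‖₂`. -/

lemma euclNorm_eq_norm {m : ℕ} (v : Fin m → ℝ) : euclNorm v = ‖WithLp.toLp 2 v‖ := by
  simp [euclNorm, EuclideanSpace.norm_eq, Real.norm_eq_abs, sq_abs]

noncomputable def euclSeminorm (m : ℕ) : Seminorm ℝ (Fin m → ℝ) :=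
  (normSeminorm ℝ (EuclideanSpace ℝ (Fin m))).comp
    (WithLp.linearEquiv 2 ℝ (Fin m → ℝ)).symm.toLinearMap

lemma coe_euclSeminorm (m : ℕ) : ⇑(euclSeminorm m) = euclNorm := by
  ext v
  simp [euclSeminorm, euclNorm_eq_norm]

noncomputable def mulVecSeminorm {m n : ℕ} (A : Matrix (Fin m) (Fin n) ℝ) :
    Seminorm ℝ (Fin n → ℝ) :=
  (euclSeminorm m).comp A.mulVecLin

lemma mulVecSeminorm_apply {m n : ℕ} (A : Matrix (Fin m) (Fin n) ℝ) (v : Fin n → ℝ) :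
    mulVecSeminorm A v = euclNorm (A *ᵥ v) := by
  simp [mulVecSeminorm, coe_euclSeminorm]

lemma exists_pos_mulVecSeminorm_le {m n : ℕ} (A : Matrix (Fin m) (Fin n) ℝ) :
    ∃ c > (0 : ℝ), ∀ v, mulVecSeminorm A v ≤ c * euclNorm v := by
  open scoped Matrix.Norms.L2Operator in
  refine ⟨‖A‖ + 1, by positivity, fun v => ?_⟩
  rw [mulVecSeminorm_apply, euclNorm_eq_norm, euclNorm_eq_norm]
  calc ‖WithLp.toLp 2 (A *ᵥ v)‖ ≤ ‖A‖ * ‖WithLp.toLp 2 v‖ := A.l2_opNorm_mulVec _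
    _ ≤ (‖A‖ + 1) * ‖WithLp.toLp 2 v‖ := by gcongr; linarith

noncomputable def gammaInvSqrt {m : ℕ} (Γ : Matrix (Fin m) (Fin m) ℝ) (hΓ : Γ.PosDef) :
    Matrix (Fin m) (Fin m) ℝ :=
  (hΓ.posSemidef.1.eigenvectorUnitary.1 *
    diagonal ((↑) ∘ (√·) ∘ hΓ.posSemidef.1.eigenvalues) *
    (star hΓ.posSemidef.1.eigenvectorUnitary : Matrix (Fin m) (Fin m) ℝ))⁻¹

lemma coe_mulVecSeminorm_gammaInvSqrt {m : ℕ} (Γ : Matrix (Fin m) (Fin m) ℝ)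
    (hΓ : Γ.PosDef) : ⇑(mulVecSeminorm (gammaInvSqrt Γ hΓ)) = gammaNorm Γ hΓ := by
  ext v
  rw [mulVecSeminorm_apply, gammaNorm, gammaInvSqrt]

lemma abs_half_sq_sub_half_sq_le {a b B : ℝ} (ha : 0 ≤ a) (hb : 0 ≤ b) (haB : a ≤ B)
    (hbB : b ≤ B) : |1 / 2 * a ^ 2 - 1 / 2 * b ^ 2| ≤ B * |a - b| := by
  have hfactor : 1 / 2 * a ^ 2 - 1 / 2 * b ^ 2 = (a + b) / 2 * (a - b) := by ring
  rw [hfactor, abs_mul, abs_of_nonneg (by positivity : 0 ≤ (a + b) / 2)]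
  gcongr
  linarith

section HalfSqPotential

variable {X V F : Type*} [SeminormedAddCommGroup X] [AddCommGroup V] [FunLike F V ℝ]
  [AddGroupSeminormClass F V ℝ] (p : F) {q : V → ℝ} {G : X → V} {ε M c : ℝ}

lemma abs_half_sq_map_sub_half_sq_map_le {x₁ x₂ : V} {B : ℝ} (h₁ : p x₁ ≤ B) (h₂ : p x₂ ≤ B) :
    |1 / 2 * p x₁ ^ 2 - 1 / 2 * p x₂ ^ 2| ≤ B * p (x₁ - x₂) :=
  (abs_half_sq_sub_half_sq_le (apply_nonneg p x₁) (apply_nonneg p x₂) h₁ h₂).trans <|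
    mul_le_mul_of_nonneg_left (abs_sub_map_le_sub p x₁ x₂) ((apply_nonneg p x₁).trans h₁)

variable {p}

lemma map_sub_le_exp_add_mul (hG : ∀ u, p (G u) ≤ Real.exp (ε * ‖u‖ + M))
    (hpq : ∀ y, p y ≤ c * q y) (u : X) (y : V) :
    p (G u - y) ≤ Real.exp (ε * ‖u‖ + M) + c * q y :=
  (map_sub_le_add p _ _).trans (add_le_add (hG u) (hpq y))

lemma map_sub_le_exp_add_mul_of_lt (hε : 0 ≤ ε) (hc : 0 ≤ c)
    (hG : ∀ u, p (G u) ≤ Real.exp (ε * ‖u‖ + M)) (hpq : ∀ y, p y ≤ c * q y)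
    {r : ℝ} {u : X} {y : V} (hu : ‖u‖ < r) (hy : q y < r) :
    p (G u - y) ≤ Real.exp (ε * r + M) + c * r := by
  refine (map_sub_le_exp_add_mul hG hpq u y).trans (add_le_add ?_ ?_) <;> gcongr

theorem exists_half_sq_map_sub_le (hε : 0 ≤ ε) (hc : 0 ≤ c)
    (hG : ∀ u, p (G u) ≤ Real.exp (ε * ‖u‖ + M)) (hpq : ∀ y, p y ≤ c * q y) :
    ∀ r > (0 : ℝ), ∃ K > (0 : ℝ), ∀ (u : X) (y : V),
      max ‖u‖ (q y) < r → 1 / 2 * p (G u - y) ^ 2 ≤ K := by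
  intro r hr
  refine ⟨1 / 2 * (Real.exp (ε * r + M) + c * r) ^ 2, by positivity, fun u y huy => ?_⟩
  obtain ⟨hu, hy⟩ := max_lt_iff.mp huy
  have hbound := map_sub_le_exp_add_mul_of_lt hε hc hG hpq hu hy
  gcongr

theorem exists_abs_half_sq_map_sub_sub_le_mul_norm_sub (hε : 0 ≤ ε) (hc : 0 ≤ c)
    (hG : ∀ u, p (G u) ≤ Real.exp (ε * ‖u‖ + M)) (hpq : ∀ y, p y ≤ c * q y)
    (hGlip : ∀ r > (0 : ℝ), ∃ K > (0 : ℝ), ∀ u₁ u₂ : X,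
      max ‖u₁‖ ‖u₂‖ < r → p (G u₁ - G u₂) ≤ K * ‖u₁ - u₂‖) :
    ∀ r > (0 : ℝ), ∃ L > (0 : ℝ), ∀ (u₁ u₂ : X) (y : V),
      max (max ‖u₁‖ ‖u₂‖) (q y) < r →
      |1 / 2 * p (G u₁ - y) ^ 2 - 1 / 2 * p (G u₂ - y) ^ 2| ≤ L * ‖u₁ - u₂‖ := by
  intro r hr
  obtain ⟨K, hK, hGK⟩ := hGlip r hr
  set B := Real.exp (ε * r + M) + c * r
  refine ⟨B * K, by positivity, fun u₁ u₂ y huy => ?_⟩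
  simp only [max_lt_iff] at huy
  obtain ⟨⟨hu₁, hu₂⟩, hy⟩ := huy
  calc |1 / 2 * p (G u₁ - y) ^ 2 - 1 / 2 * p (G u₂ - y) ^ 2|
      ≤ B * p (G u₁ - y - (G u₂ - y)) :=
        abs_half_sq_map_sub_half_sq_map_le p
          (map_sub_le_exp_add_mul_of_lt hε hc hG hpq hu₁ hy)
          (map_sub_le_exp_add_mul_of_lt hε hc hG hpq hu₂ hy)
    _ ≤ B * (K * ‖u₁ - u₂‖) := by
        rw [sub_sub_sub_cancel_right]
        gcongr
        exact hGK u₁ u₂ (max_lt hu₁ hu₂)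
    _ = B * K * ‖u₁ - u₂‖ := by ring

lemma exp_add_add_le_exp_mul {s M b : ℝ} (hs : 0 ≤ s) (hb : 0 ≤ b) :
    Real.exp (s + M) + b ≤ Real.exp s * (Real.exp M + b) := by
  rw [Real.exp_add, mul_add]
  gcongr
  exact le_mul_of_one_le_left hb (Real.one_le_exp hs)

theorem exists_abs_half_sq_map_sub_sub_le_exp_mul (hε : 0 ≤ ε) (hc : 0 < c)
    (hG : ∀ u, p (G u) ≤ Real.exp (ε * ‖u‖ + M)) (hpq : ∀ y, p y ≤ c * q y) :
    ∀ r > (0 : ℝ), ∃ C : ℝ, ∀ (u : X) (y₁ y₂ : V), max (q y₁) (q y₂) < r →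
      |1 / 2 * p (G u - y₁) ^ 2 - 1 / 2 * p (G u - y₂) ^ 2| ≤
        Real.exp (ε * ‖u‖ + C) * q (y₁ - y₂) := by
  intro r hr
  refine ⟨Real.log (c * (Real.exp M + c * r)), fun u y₁ y₂ hy => ?_⟩
  obtain ⟨hy₁, hy₂⟩ := max_lt_iff.mp hy
  set B := Real.exp (ε * ‖u‖ + M) + c * r
  have hbound : ∀ y, q y < r → p (G u - y) ≤ B := fun y hy =>
    (map_sub_le_exp_add_mul hG hpq u y).trans
      (add_le_add_right (mul_le_mul_of_nonneg_left hy.le hc.le) _)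
  have hq : 0 ≤ q (y₁ - y₂) :=
    nonneg_of_mul_nonneg_right ((apply_nonneg p _).trans (hpq _)) hc
  have hBc : B * c ≤ Real.exp (ε * ‖u‖ + Real.log (c * (Real.exp M + c * r))) := by
    rw [Real.exp_add, Real.exp_log (by positivity)]
    calc B * c ≤ Real.exp (ε * ‖u‖) * (Real.exp M + c * r) * c := by
          gcongr; exact exp_add_add_le_exp_mul (by positivity) (by positivity)
      _ = _ := by ring
  calc |1 / 2 * p (G u - y₁) ^ 2 - 1 / 2 * p (G u - y₂) ^ 2|
      ≤ B * p (G u - y₁ - (G u - y₂)) :=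
        abs_half_sq_map_sub_half_sq_map_le p (hbound y₁ hy₁) (hbound y₂ hy₂)
    _ = B * p (y₁ - y₂) := by rw [sub_sub_sub_cancel_left, map_sub_rev]
    _ ≤ B * c * q (y₁ - y₂) := by rw [mul_assoc]; gcongr; exact hpq _
    _ ≤ _ := by gcongr

end HalfSqPotential

theorem gaussian_potential_satisfies_assumptions_general
    {X : Type*} [NormedAddCommGroup X]
    (m : ℕ)
    (Γ : Matrix (Fin m) (Fin m) ℝ) (hΓ : Γ.PosDef)
    (G : X → Fin m → ℝ)
    (ha : ∃ ε > (0 : ℝ), ∃ M : ℝ, ∀ u : X,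
      gammaNorm Γ hΓ (G u) ≤ Real.exp (ε * ‖u‖ + M))
    (hb : ∀ r > (0 : ℝ), ∃ K > (0 : ℝ), ∀ u₁ u₂ : X,
      max ‖u₁‖ ‖u₂‖ < r →
      gammaNorm Γ hΓ (G u₁ - G u₂) ≤ K * ‖u₁ - u₂‖) :
    (∀ (u : X) (y : Fin m → ℝ),
      0 ≤ (1 / 2) * (gammaNorm Γ hΓ (G u - y)) ^ 2) ∧
    (∀ r > (0 : ℝ), ∃ K > (0 : ℝ), ∀ (u : X) (y : Fin m → ℝ),
      max ‖u‖ (euclNorm y) < r →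
      (1 / 2) * (gammaNorm Γ hΓ (G u - y)) ^ 2 ≤ K) ∧
    (∀ r > (0 : ℝ), ∃ L > (0 : ℝ), ∀ (u₁ u₂ : X) (y : Fin m → ℝ),
      max (max ‖u₁‖ ‖u₂‖) (euclNorm y) < r →
      |(1 / 2) * (gammaNorm Γ hΓ (G u₁ - y)) ^ 2 -
        (1 / 2) * (gammaNorm Γ hΓ (G u₂ - y)) ^ 2| ≤ L * ‖u₁ - u₂‖) ∧
    (∃ α₂ ≥ (0 : ℝ), ∀ r > (0 : ℝ), ∃ C : ℝ, ∀ (u : X) (y₁ y₂ : Fin m → ℝ),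
      max (euclNorm y₁) (euclNorm y₂) < r →
      |(1 / 2) * (gammaNorm Γ hΓ (G u - y₁)) ^ 2 -
        (1 / 2) * (gammaNorm Γ hΓ (G u - y₂)) ^ 2| ≤
        Real.exp (α₂ * ‖u‖ + C) * euclNorm (y₁ - y₂)) := by
  obtain ⟨ε, hε, M, hG⟩ := ha
  obtain ⟨c, hc, hpq⟩ := exists_pos_mulVecSeminorm_le (gammaInvSqrt Γ hΓ)
  rw [← coe_mulVecSeminorm_gammaInvSqrt] at hG hb ⊢
  exact ⟨fun _ _ => by positivity,
    exists_half_sq_map_sub_le hε.le hc.le hG hpq,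
    exists_abs_half_sq_map_sub_sub_le_mul_norm_sub hε.le hc.le hG hpq hb,
    ε, hε.le, exists_abs_half_sq_map_sub_sub_le_exp_mul hε.le hc hG hpq⟩

/-- If the forward map `𝒢 : X → ℝ^m` is exponentially bounded and locally Lipschitz,
then the Gaussian likelihood potential `Φ(u;y) = ½‖𝒢(u) − y‖_Γ²` satisfies:
(i) nonnegativity, (ii) boundedness above on bounded sets, (iii) local Lipschitz
continuity in `u`, and (iv) Lipschitz continuity in `y` with constant
`exp(α₂‖u‖ + C(r))`. -/
theorem gaussian_potential_satisfies_assumptions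
    {X : Type*} [NormedAddCommGroup X] [NormedSpace ℝ X] [CompleteSpace X]
    (m : ℕ) (hm : 0 < m)
    (Γ : Matrix (Fin m) (Fin m) ℝ) (hΓ : Γ.PosDef)
    (G : X → Fin m → ℝ)
    (ha : ∃ ε > (0 : ℝ), ∃ M : ℝ, ∀ u : X,
      gammaNorm Γ hΓ (G u) ≤ Real.exp (ε * ‖u‖ + M))
    (hb : ∀ r > (0 : ℝ), ∃ K > (0 : ℝ), ∀ u₁ u₂ : X,
      max ‖u₁‖ ‖u₂‖ < r →
      gammaNorm Γ hΓ (G u₁ - G u₂) ≤ K * ‖u₁ - u₂‖) :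
    (∀ (u : X) (y : Fin m → ℝ),
      0 ≤ (1 / 2) * (gammaNorm Γ hΓ (G u - y)) ^ 2) ∧
    (∀ r > (0 : ℝ), ∃ K > (0 : ℝ), ∀ (u : X) (y : Fin m → ℝ),
      max ‖u‖ (euclNorm y) < r →
      (1 / 2) * (gammaNorm Γ hΓ (G u - y)) ^ 2 ≤ K) ∧
    (∀ r > (0 : ℝ), ∃ L > (0 : ℝ), ∀ (u₁ u₂ : X) (y : Fin m → ℝ),
      max (max ‖u₁‖ ‖u₂‖) (euclNorm y) < r →
      |(1 / 2) * (gammaNorm Γ hΓ (G u₁ - y)) ^ 2 -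
        (1 / 2) * (gammaNorm Γ hΓ (G u₂ - y)) ^ 2| ≤ L * ‖u₁ - u₂‖) ∧
    (∃ α₂ ≥ (0 : ℝ), ∀ r > (0 : ℝ), ∃ C : ℝ, ∀ (u : X) (y₁ y₂ : Fin m → ℝ),
      max (euclNorm y₁) (euclNorm y₂) < r →
      |(1 / 2) * (gammaNorm Γ hΓ (G u - y₁)) ^ 2 -
        (1 / 2) * (gammaNorm Γ hΓ (G u - y₂)) ^ 2| ≤
        Real.exp (α₂ * ‖u‖ + C) * euclNorm (y₁ - y₂)) :=
  gaussian_potential_satisfies_assumptions_general m Γ hΓ G ha hb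
end
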